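/- Let λ be an infinite cardinal and let 𝔉 be any class of graphs of size λ with Forb_λ(P_ω) ⊆ 𝔉 ⊆ Forb^ind_λ(R). Then 𝔉 has no universal element with respect to induced-subgraph embeddings: for every H ∈ 𝔉 there exists G' ∈ Forb_λ(P_ω) ⊆ 𝔉 that does not embed into H as an induced subgraph. -/

import Mathlib

/-!
Suppose every ray-free graph of size `λ` embeds into `H`. For `α < λ⁺` of cardinality `λ` the
graph `R_α` on the tree `T α` of decreasing sequences of ordinals is ray-free, because `T α` has
no infinite branch, so it embeds into `H`. As `λ⁺` is regular, a pigeonhole argument picks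
vertices `x₀, x₁, …` of `H` such that each `x₀ … xₙ` is the image of a chain with `d`-values
`0, …, n` under embeddings of `R_α` whose last vertex has arbitrarily large rank. Along such a
chain adjacency in `R_α` is adjacency of the `d`-values in `R`, so `n ↦ xₙ` is an induced copy
of `R` in `H`.
-/

open Cardinal Ordinal

/-- The poset `T α`: strictly decreasing finite lists of ordinals `< α`, ordered by
reverse strict-prefix; the empty list is the top element, and the lists starting with `β`
form the copy of `T β`. -/
def TT (α : Ordinal) : Type 1 :=
  {l : List Ordinal // l.Pairwise (· > ·) ∧ ∀ x ∈ l, x < α}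

instance instPOTT (α : Ordinal) : PartialOrder (TT α) where
  le u v := v.1 <+: u.1
  le_refl u := List.prefix_refl _
  le_trans _ _ _ h1 h2 := List.IsPrefix.trans h2 h1
  le_antisymm _ _ h1 h2 :=
    Subtype.ext (List.IsPrefix.eq_of_length h2 ((List.IsPrefix.length_le h2).antisymm (List.IsPrefix.length_le h1)))

/-- The top element of `T α`. -/
def topT (α : Ordinal) : TT α := ⟨[], by simp, by simp⟩

/-- The rank function of the reversed order `⟨T α, >⟩`. -/
def dT {α : Ordinal} (v : TT α) : ℕ := v.1.length

/-- The rank function of `⟨T α, <⟩`; the top element has rank `α`. -/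
def rT {α : Ordinal} (v : TT α) : Ordinal := v.1.getLastD α

/-- The graph `G_α` on `T α`: `u ~ v` iff `u, v` are comparable and `d u ~_G d v`. -/
def Gg (G : SimpleGraph ℕ) (α : Ordinal) : SimpleGraph (TT α) where
  Adj u v := u ≠ v ∧ (u ≤ v ∨ v ≤ u) ∧ G.Adj (dT u) (dT v)
  symm := ⟨fun _ _ h => ⟨Ne.symm h.1, h.2.1.symm, h.2.2.symm⟩⟩
  loopless := ⟨fun _ h => h.1 rfl⟩

/-- The one-way infinite path `P_ω` on `ℕ`. -/
def rayG : SimpleGraph ℕ := SimpleGraph.fromRel (fun m n => n = m + 1)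

/-- `A` is a (not necessarily induced) subgraph of `B`. -/
def SubCopy {X Y : Type*} (A : SimpleGraph X) (B : SimpleGraph Y) : Prop :=
  ∃ f : X ↪ Y, ∀ u v, A.Adj u v → B.Adj (f u) (f v)

/-- `R` is (isomorphic to) the countable random graph: the extension property. -/
def IsRado (R : SimpleGraph ℕ) : Prop :=
  ∀ A B : Finset ℕ, Disjoint A B →
    ∃ v, v ∉ A ∧ v ∉ B ∧ (∀ a ∈ A, R.Adj v a) ∧ (∀ b ∈ B, ¬R.Adj v b)

/-- An `(s, ξ)`-embedding: an induced embedding of some `G_α`, `ξ ≤ α < λ⁺`, into `H`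
whose image contains `s` as the top part of a chain with `d`-values `0, …, n` and whose
last vertex has rank `> ξ`. -/
def IsSXEmb {V : Type} (G : SimpleGraph ℕ) (lam : Cardinal) (H : SimpleGraph V)
    (s : List V) (ξ : Ordinal) : Prop :=
  ∃ α : Ordinal, ξ ≤ α ∧ α < (Order.succ lam).ord ∧
    ∃ (f : Gg G α ↪g H) (t : List (TT α)),
      s = t.map ⇑f ∧
      (∀ i : Fin t.length, dT (t.get i) = i.1) ∧
      (∀ u ∈ t, ∀ v ∈ t, u ≤ v ∨ v ≤ u) ∧
      (∀ v ∈ t.getLast?, ξ < rT v)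

/-- The set `U` of finite sequences admitting `(s, ξ)`-embeddings for all `ξ < λ⁺`. -/
def UU {V : Type} (G : SimpleGraph ℕ) (lam : Cardinal) (H : SimpleGraph V) :
    Set (List V) :=
  {s | ∀ ξ < (Order.succ lam).ord, IsSXEmb G lam H s ξ}

lemma Nat.testBit_sum_two_pow_iff (s : Finset ℕ) (k : ℕ) :
    (∑ i ∈ s, 2 ^ i).testBit k ↔ k ∈ s := by
  rw [← Nat.mem_bitIndices, ← List.mem_toFinset, Finset.toFinset_bitIndices_sum_two_pow]

/-- The Ackermann–Rado graph. -/
def radoG : SimpleGraph ℕ := SimpleGraph.fromRel fun m n => n.testBit m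

lemma isRado_radoG : IsRado radoG := by
  intro A B hAB
  obtain ⟨N, hN⟩ := (A ∪ B).exists_nat_subset_range
  have hlt : ∀ x ∈ A ∪ B, x < N := fun x hx => Finset.mem_range.mp (hN hx)
  set v := ∑ i ∈ insert N A, 2 ^ i
  have hbit : ∀ k, v.testBit k ↔ k ∈ insert N A := Nat.testBit_sum_two_pow_iff _
  have hNv : N < v := N.lt_two_pow_self.trans_le
    (Nat.ge_two_pow_of_testBit ((hbit N).mpr (Finset.mem_insert_self N A)))
  have hv : ∀ x ∈ A ∪ B, x < v := fun x hx => (hlt x hx).trans hNv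
  refine ⟨v, fun h => (hv v (Finset.mem_union_left _ h)).false,
    fun h => (hv v (Finset.mem_union_right _ h)).false, fun a ha => ?_, fun b hb => ?_⟩
  · exact ⟨(hv a (Finset.mem_union_left _ ha)).ne',
      Or.inr ((hbit a).mpr (Finset.mem_insert_of_mem ha))⟩
  · have hbB : b ∈ A ∪ B := Finset.mem_union_right _ hb
    rintro ⟨-, h | h⟩
    · simp [Nat.testBit_lt_two_pow ((hv b hbB).trans v.lt_two_pow_self)] at h
    · rcases Finset.mem_insert.mp ((hbit b).mp h) with rfl | hbA
      · exact (hlt _ hbB).false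
      · exact Finset.disjoint_left.mp hAB hbA hb

lemma SubCopy.of_comap {X V W : Type*} {A : SimpleGraph X} {B : SimpleGraph W} (f : V ↪ W)
    (h : SubCopy A (B.comap f)) : SubCopy A B := by
  obtain ⟨g, hg⟩ := h
  exact ⟨g.trans f, hg⟩

/-- Along an infinite path the first entry is eventually constant, `β` say, and dropping it gives
an infinite path in `T β`. -/
lemma not_injective_of_isPrefix_or (α : Ordinal) (v : ℕ → List Ordinal)
    (hv : ∀ n, (v n).Pairwise (· > ·) ∧ ∀ x ∈ v n, x < α)
    (hcomp : ∀ n, v n <+: v (n + 1) ∨ v (n + 1) <+: v n) : ¬ Function.Injective v := by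
  induction α using WellFoundedLT.induction generalizing v with
  | _ α IH =>
  intro hinj
  obtain ⟨N, hN⟩ : ∃ N, ∀ n, v (N + n) ≠ [] := by
    by_cases h : ∃ n₀, v n₀ = []
    · obtain ⟨n₀, h₀⟩ := h
      exact ⟨n₀ + 1, fun n hn => by have := hinj (hn.trans h₀.symm); omega⟩
    · exact ⟨0, fun n hn => h ⟨_, hn⟩⟩
  have hcomp' (n : ℕ) : v (N + n) <+: v (N + (n + 1)) ∨ v (N + (n + 1)) <+: v (N + n) :=
    hcomp (N + n)
  obtain ⟨β, l, hβl⟩ : ∃ β l, v N = β :: l := List.exists_cons_of_ne_nil (hN 0)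
  have hcons : ∀ n, v (N + n) = β :: (v (N + n)).tail := by
    intro n
    induction n with
    | zero => simp [hβl]
    | succ n ih =>
      obtain ⟨c, m, hcm⟩ := List.exists_cons_of_ne_nil (hN (n + 1))
      have h := hcomp' n
      rw [ih, hcm] at h
      have hc : c = β := by
        rcases h with h | h
        · exact (List.cons_prefix_cons.mp h).1.symm
        · exact (List.cons_prefix_cons.mp h).1
      rw [hcm, hc, List.tail_cons]
  have hβ : β < α := (hv N).2 β (by simp [hβl])
  refine IH β hβ (fun n => (v (N + n)).tail) (fun n => ?_) (fun n => ?_) (fun a b hab => ?_)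
  · have h := hv (N + n)
    rw [hcons n, List.pairwise_cons] at h
    exact ⟨h.1.2, fun x hx => h.1.1 x hx⟩
  · have h := hcomp' n
    rwa [hcons n, hcons (n + 1), List.cons_prefix_cons, List.cons_prefix_cons,
      and_iff_right rfl, and_iff_right rfl] at h
  · have := hinj ((hcons a).trans ((congrArg (β :: ·) hab).trans (hcons b).symm))
    omega

lemma not_subCopy_rayG_Gg (G : SimpleGraph ℕ) (α : Ordinal) : ¬ SubCopy rayG (Gg G α) := by
  rintro ⟨f, hf⟩
  refine not_injective_of_isPrefix_or α (fun n => (f n).1) (fun n => (f n).2)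
    (fun n => ?_) (Subtype.val_injective.comp f.injective)
  have hray : rayG.Adj n (n + 1) := by simp [rayG]
  exact (hf n (n + 1) hray).2.1.symm

lemma mk_TT {α : Ordinal} (hα : ℵ₀ ≤ α.card) : #(TT α) = Cardinal.lift.{1} α.card := by
  apply le_antisymm
  · have hlist : #(TT α) ≤ #(List (Set.Iio α)) := by
      refine Cardinal.mk_le_of_injective
        (f := fun u => u.1.attachWith (· ∈ Set.Iio α) u.2.2) fun u w huw => Subtype.ext ?_
      exact (List.attachWith_map_subtype_val ..).symm.trans
        ((congrArg (List.map Subtype.val) huw).trans (List.attachWith_map_subtype_val ..))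
    refine hlist.trans ((Cardinal.mk_list_le_max _).trans ?_)
    rw [Cardinal.mk_Iio_ordinal, ← Cardinal.lift_aleph0.{1, 0}]
    exact max_le (Cardinal.lift_le.mpr hα) le_rfl
  · rw [← Cardinal.mk_Iio_ordinal]
    refine Cardinal.mk_le_of_injective
      (f := fun x => (⟨[x.1], List.pairwise_singleton _ _,
        fun y hy => List.mem_singleton.mp hy ▸ x.2⟩ : TT α))
      fun x y hxy => Subtype.ext ?_
    simpa using congrArg Subtype.val hxy

lemma nonempty_Gg_embedding {V : Type} {lam : Cardinal} {H : SimpleGraph V}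
    (hlam : ℵ₀ ≤ lam) (hV : #V = lam) (G : SimpleGraph ℕ) {α : Ordinal} (hα : α.card = lam)
    (hU : ∀ G' : SimpleGraph V, ¬ SubCopy rayG G' → Nonempty (G' ↪g H)) :
    Nonempty (Gg G α ↪g H) := by
  obtain ⟨e⟩ : Nonempty (V ≃ TT α) :=
    Cardinal.lift_mk_eq'.mp (by rw [mk_TT (hα ▸ hlam), hα, hV, Cardinal.lift_uzero])
  obtain ⟨g⟩ := hU _ fun h => not_subCopy_rayG_Gg G α (h.of_comap e.toEmbedding)
  exact ⟨g.comp (SimpleGraph.Iso.comap e (Gg G α)).symm.toEmbedding⟩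

lemma List.lt_of_lt_getLastD {β : Type*} [Preorder β] :
    ∀ {l : List β} {d b : β}, l.Pairwise (· > ·) → (∀ x ∈ l, x < d) → b < l.getLastD d →
      (∀ x ∈ l, b < x) ∧ b < d
  | [], _, _, _, _, h => ⟨by simp, h⟩
  | a :: _, _, _, hl, hd, h => by
    rw [List.pairwise_cons] at hl
    rw [List.getLastD_cons] at h
    obtain ⟨hlt, hba⟩ := lt_of_lt_getLastD hl.2 hl.1 h
    exact ⟨List.forall_mem_cons.2 ⟨hba, hlt⟩, hba.trans (hd a List.mem_cons_self)⟩

namespace TT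

variable {α : Ordinal}

def snoc (u : TT α) (β : Ordinal) (hβ : β < rT u) : TT α :=
  ⟨u.1 ++ [β],
    List.pairwise_append.2 ⟨u.2.1, List.pairwise_singleton _ _, fun x hx _ hy =>
      List.mem_singleton.1 hy ▸ (List.lt_of_lt_getLastD u.2.1 u.2.2 hβ).1 x hx⟩,
    fun x hx => (List.mem_append.1 hx).elim (u.2.2 x) fun hx =>
      List.mem_singleton.1 hx ▸ (List.lt_of_lt_getLastD u.2.1 u.2.2 hβ).2⟩

lemma snoc_le (u : TT α) (β : Ordinal) (hβ : β < rT u) : snoc u β hβ ≤ u :=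
  List.prefix_append _ _

lemma dT_snoc (u : TT α) (β : Ordinal) (hβ : β < rT u) : dT (snoc u β hβ) = dT u + 1 :=
  List.length_append ..

lemma rT_snoc (u : TT α) (β : Ordinal) (hβ : β < rT u) : rT (snoc u β hβ) = β :=
  List.getLastD_concat

lemma eq_of_le_of_dT_le {u v : TT α} (h : u ≤ v) (hd : dT u ≤ dT v) : u = v :=
  Subtype.ext (h.eq_of_length (h.length_le.antisymm hd)).symm

lemma forall_dT_get_iff {t : List (TT α)} :
    (∀ i : Fin t.length, dT (t.get i) = i) ↔ t.map dT = List.range t.length := by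
  simp [List.ext_getElem_iff, Fin.forall_iff]

lemma exists_extend_chain {t : List (TT α)} (hd : t.map dT = List.range t.length)
    (hc : ∀ u ∈ t, ∀ v ∈ t, u ≤ v ∨ v ≤ u) {ξ : Ordinal} (hξ : ξ < α)
    (hlast : ∀ u ∈ t.getLast?, Order.succ ξ < rT u) :
    ∃ w : TT α, dT w = t.length ∧ (∀ x ∈ t, w ≤ x) ∧ ξ < rT w := by
  rcases t.eq_nil_or_concat with rfl | ⟨t, u, rfl⟩
  · exact ⟨topT α, rfl, by simp, hξ⟩
  rw [List.concat_eq_append] at *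
  have hdu : dT u = t.length := by
    rw [List.map_append, List.length_append, List.length_singleton, List.range_succ] at hd
    simpa using (List.append_inj' hd (by simp)).2
  have hux : ∀ x ∈ t ++ [u], u ≤ x := by
    intro x hx
    have hdx : dT x < t.length + 1 := by
      simpa [hd] using List.mem_map_of_mem (f := dT) hx
    rcases hc x hx u (by simp) with h | h
    · exact (eq_of_le_of_dT_le h (by omega)).ge
    · exact h
  have hsu : Order.succ ξ < rT u := hlast u (by simp)
  exact ⟨snoc u _ hsu, by simp [dT_snoc, hdu], fun x hx => (snoc_le u _ hsu).trans (hux x hx),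
    (rT_snoc u _ hsu).symm ▸ Order.lt_succ ξ⟩

end TT

lemma exists_forall_ofFn_mem {X : Type*} {U : Set (List X)} (h0 : [] ∈ U)
    (hstep : ∀ s ∈ U, ∃ w, s ++ [w] ∈ U) :
    ∃ x : ℕ → X, ∀ n, List.ofFn (fun i : Fin n => x i) ∈ U := by
  choose next hnext using hstep
  let seq : ℕ → U := fun n =>
    Nat.rec ⟨[], h0⟩ (fun _ p => ⟨p.1 ++ [next p.1 p.2], hnext p.1 p.2⟩) n
  refine ⟨fun n => next (seq n).1 (seq n).2, fun n => ?_⟩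
  suffices (seq n).1 = List.ofFn (fun i : Fin n => next (seq i).1 (seq i).2) from this ▸ (seq n).2
  induction n with
  | zero => rfl
  | succ n ih =>
    rw [List.ofFn_succ_last]
    simp only [Fin.val_castSucc, Fin.val_last]
    rw [← ih]

section Embeddings

variable {V : Type} {G : SimpleGraph ℕ} {lam : Cardinal} {H : SimpleGraph V} {s : List V}

lemma IsSXEmb.of_le {ξ ξ' : Ordinal} (hle : ξ' ≤ ξ) (h : IsSXEmb G lam H s ξ) :
    IsSXEmb G lam H s ξ' := by
  obtain ⟨α, hξα, hα, f, t, hs, hd, hc, hlast⟩ := h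
  exact ⟨α, hle.trans hξα, hα, f, t, hs, hd, hc, fun v hv => hle.trans_lt (hlast v hv)⟩

lemma IsSXEmb.exists_append {ξ : Ordinal} (h : IsSXEmb G lam H s (Order.succ ξ)) :
    ∃ w, IsSXEmb G lam H (s ++ [w]) ξ := by
  obtain ⟨α, hξα, hα, f, t, rfl, hd, hc, hlast⟩ := h
  rw [TT.forall_dT_get_iff] at hd
  obtain ⟨w, hwd, hwle, hwr⟩ :=
    TT.exists_extend_chain hd hc ((Order.lt_succ ξ).trans_le hξα) hlast
  refine ⟨f w, α, (Order.le_succ ξ).trans hξα, hα, f, t ++ [w], by simp, ?_, ?_, by simpa using hwr⟩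
  · rw [TT.forall_dT_get_iff]
    simp [hd, hwd, List.range_succ]
  · simp only [List.mem_append, List.mem_singleton]
    rintro u (hu | rfl) v (hv | rfl)
    exacts [hc u hu v hv, .inr (hwle u hu), .inl (hwle v hv), .inl le_rfl]

lemma IsSXEmb.getElem_eq_iff {ξ : Ordinal} (h : IsSXEmb G lam H s ξ) {i j : ℕ}
    (hi : i < s.length) (hj : j < s.length) : s[i] = s[j] ↔ i = j := by
  obtain ⟨α, -, -, f, t, rfl, hd, -, -⟩ := h
  rw [List.length_map] at hi hj
  have hdi : dT t[i] = i := by simpa using hd ⟨i, by simpa using hi⟩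
  have hdj : dT t[j] = j := by simpa using hd ⟨j, by simpa using hj⟩
  simp only [List.getElem_map, f.injective.eq_iff]
  exact ⟨fun h => hdi.symm.trans ((congrArg dT h).trans hdj), fun h => by subst h; rfl⟩

lemma IsSXEmb.adj_getElem_iff {ξ : Ordinal} (h : IsSXEmb G lam H s ξ) {i j : ℕ}
    (hi : i < s.length) (hj : j < s.length) : H.Adj s[i] s[j] ↔ G.Adj i j := by
  obtain ⟨α, -, -, f, t, rfl, hd, hc, -⟩ := h
  rw [List.length_map] at hi hj
  have hdi : dT t[i] = i := by simpa using hd ⟨i, by simpa using hi⟩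
  have hdj : dT t[j] = j := by simpa using hd ⟨j, by simpa using hj⟩
  simp only [List.getElem_map, f.map_adj_iff]
  change (_ ∧ _ ∧ _) ↔ _
  rw [hdi, hdj]
  refine ⟨fun h => h.2.2, fun hG =>
    ⟨fun heq => ?_, hc _ (List.getElem_mem _) _ (List.getElem_mem _), hG⟩⟩
  exact hG.ne (hdi.symm.trans ((congrArg dT heq).trans hdj))

lemma nil_mem_UU (hemb : ∀ α : Ordinal, α.card = lam → Nonempty (Gg G α ↪g H)) :
    [] ∈ UU G lam H := by
  intro ξ hξ
  have hα : max ξ lam.ord < (Order.succ lam).ord :=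
    max_lt hξ (Cardinal.ord_lt_ord.2 (Order.lt_succ lam))
  have hcard : (max ξ lam.ord).card = lam :=
    le_antisymm (Order.lt_succ_iff.1 (Cardinal.lt_ord.1 hα))
      ((Cardinal.card_ord lam).symm.trans_le (Ordinal.card_le_card (le_max_right _ _)))
  obtain ⟨f⟩ := hemb _ hcard
  exact ⟨_, le_max_left _ _, hα, f, [], rfl, nofun, by simp, by simp⟩

/-- Since `λ⁺` is regular and there are only `λ` candidates `w`, one of them works for
cofinally many `ξ`, hence for all. -/
lemma exists_append_mem_UU (hlam : ℵ₀ ≤ lam) (hV : #V ≤ lam) (hs : s ∈ UU G lam H) :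
    ∃ w, s ++ [w] ∈ UU G lam H := by
  by_contra! h
  simp only [UU, Set.mem_ofPred_eq, not_forall] at h
  choose η hη hfail using h
  have hsup : ⨆ w, η w < (Order.succ lam).ord := by
    refine Ordinal.iSup_lt_of_lt_cof ?_ hη
    rw [(Cardinal.isRegular_succ hlam).cof_ord]
    exact hV.trans_lt (Order.lt_succ lam)
  have hlim := Cardinal.isSuccLimit_ord (hlam.trans (Order.le_succ lam))
  obtain ⟨w, hw⟩ := (hs _ (hlim.succ_lt hsup)).exists_append
  exact hfail w (hw.of_le (Ordinal.le_iSup η w))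

theorem nonempty_embedding_of_forall_Gg (hlam : ℵ₀ ≤ lam) (hV : #V ≤ lam)
    (hemb : ∀ α : Ordinal, α.card = lam → Nonempty (Gg G α ↪g H)) : Nonempty (G ↪g H) := by
  obtain ⟨x, hx⟩ :=
    exists_forall_ofFn_mem (nil_mem_UU hemb) fun s hs => exists_append_mem_UU hlam hV hs
  have h0 : (0 : Ordinal) < (Order.succ lam).ord :=
    (Cardinal.isSuccLimit_ord (hlam.trans (Order.le_succ lam))).pos
  have hseg (i j : ℕ) := hx (max i j + 1) 0 h0
  have hlt (i j : ℕ) : i < (List.ofFn fun k : Fin (max i j + 1) => x k).length ∧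
      j < (List.ofFn fun k : Fin (max i j + 1) => x k).length := by
    simp only [List.length_ofFn]
    omega
  have hinj : Function.Injective x := fun i j hij => by
    simpa only [List.getElem_ofFn] using
      ((hseg i j).getElem_eq_iff (hlt i j).1 (hlt i j).2).1 (by simpa only [List.getElem_ofFn])
  have hadj (i j : ℕ) : H.Adj (x i) (x j) ↔ G.Adj i j := by
    simpa only [List.getElem_ofFn] using (hseg i j).adj_getElem_iff (hlt i j).1 (hlt i j).2
  exact ⟨⟨⟨x, hinj⟩, hadj _ _⟩⟩

end Embeddings

theorem stmt13_general {V : Type} (lam : Cardinal) (hlam : Cardinal.aleph0 ≤ lam)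
    (hV : Cardinal.mk V = lam) (F : Set (SimpleGraph V))
    (hInd : ∀ H ∈ F, ∀ R : SimpleGraph ℕ, IsRado R → ¬ Nonempty (R ↪g H)) :
    ∀ H ∈ F, ∃ G' : SimpleGraph V, ¬ SubCopy rayG G' ∧ ¬ Nonempty (G' ↪g H) := by
  intro H hH
  by_contra! hU
  exact hInd H hH radoG isRado_radoG <| nonempty_embedding_of_forall_Gg hlam hV.le
    fun _ hα => nonempty_Gg_embedding hlam hV radoG hα hU

/-- no class `𝔉` with `Forb_λ(P_ω) ⊆ 𝔉 ⊆ Forb^ind_λ(R)` has a universal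
element: for every `H ∈ 𝔉` some ray-free `G'` does not embed into `H`. -/
theorem stmt13 {V : Type} (lam : Cardinal) (hlam : Cardinal.aleph0 ≤ lam)
    (hV : Cardinal.mk V = lam) (F : Set (SimpleGraph V))
    (hForb : ∀ G : SimpleGraph V, ¬ SubCopy rayG G → G ∈ F)
    (hInd : ∀ H ∈ F, ∀ R : SimpleGraph ℕ, IsRado R → ¬ Nonempty (R ↪g H)) :
    ∀ H ∈ F, ∃ G' : SimpleGraph V, ¬ SubCopy rayG G' ∧ ¬ Nonempty (G' ↪g H) :=
  stmt13_general lam hlam hV F hInd
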